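/- For a single tree F with root u, and indices i ≤ j: sim(F, T2[i,j)) = max( sim(F - u, T2[i,j)), max over nodes v ∈ T2[i,j) of ( sim(F - u, T2[l(v)+1, r(v)-1)) + η(u, v) ) ), where η(u,v) = 2 - δ(u,v), with δ(u,v) = 0 if labels match and 1 otherwise. -/

import Mathlib

/-- Ordered rooted trees with node labels from `α`. -/
inductive Tree' (α : Type) : Type
  | node (label : α) (children : List (Tree' α))

/-- An ordered forest is an ordered list of trees. -/
abbrev Forest (α : Type) := List (Tree' α)

mutual
/-- Number of nodes of a tree. -/
def Tree'.size {α : Type} : Tree' α → ℕ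
  | .node _ cs => 1 + Forest.size cs
/-- Number of nodes of a forest. -/
def Forest.size {α : Type} : Forest α → ℕ
  | [] => 0
  | t :: ts => Tree'.size t + Forest.size ts
end

/-- A single edit operation on a forest: delete a node (promoting its children, in
order, to its parent) or relabel a node. -/
inductive EditStep {α : Type} : Forest α → Forest α → Prop
  | delete (pre : Forest α) (a : α) (cs post : Forest α) :
      EditStep (pre ++ Tree'.node a cs :: post) (pre ++ cs ++ post)
  | relabel (pre : Forest α) (a b : α) (cs post : Forest α) :
      EditStep (pre ++ Tree'.node a cs :: post) (pre ++ Tree'.node b cs :: post)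
  | inside (pre : Forest α) (a : α) {cs cs' : Forest α} (post : Forest α) :
      EditStep cs cs' →
      EditStep (pre ++ Tree'.node a cs :: post) (pre ++ Tree'.node a cs' :: post)

/-- `EditSteps n F G`: `G` is obtained from `F` by exactly `n` edit operations. -/
inductive EditSteps {α : Type} : ℕ → Forest α → Forest α → Prop
  | refl (F : Forest α) : EditSteps 0 F F
  | tail {n : ℕ} {F G H : Forest α} : EditSteps n F G → EditStep G H → EditSteps (n + 1) F H

/-- The (unweighted) tree edit distance: the minimum total number of relabelings
and deletions applied to `F1` and `F2` so that they become identical. -/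
noncomputable def ed {α : Type} (F1 F2 : Forest α) : ℕ :=
  sInf {k | ∃ (k1 k2 : ℕ) (G : Forest α), k = k1 + k2 ∧ EditSteps k1 F1 G ∧ EditSteps k2 F2 G}

/-- The similarity between two forests. -/
noncomputable def sim {α : Type} (F1 F2 : Forest α) : ℤ :=
  (Forest.size F1 : ℤ) + Forest.size F2 - ed F1 F2

mutual
/-- Helper for the subforest operation: the part of tree `t`, whose bi-order
traversal interval starts at position `p`, surviving the restriction to positions `[l, r)`.
A node is kept iff both of its occurrences lie at positions `l, …, r - 1`;
removed nodes have their children promoted. -/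
def cutT {α : Type} (l r p : ℕ) : Tree' α → Forest α
  | .node a cs =>
      if l ≤ p ∧ p + 2 * Tree'.size (Tree'.node a cs) ≤ r then [Tree'.node a cs]
      else cutF l r (p + 1) cs
/-- The part of forest `F`, whose bi-order traversal starts at position `p`,
surviving the restriction to positions `[l, r)`. -/
def cutF {α : Type} (l r p : ℕ) : Forest α → Forest α
  | [] => []
  | t :: ts => cutT l r p t ++ cutF l r (p + 2 * Tree'.size t) ts
end

/-- The subforest `F[l, r)` determined by the interval `[l, r)` of the (1-indexed)
bi-order traversal sequence of `F`. -/
def subforest {α : Type} (F : Forest α) (l r : ℕ) : Forest α := cutF l r 1 F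

/-- `OccF F base p t`: the forest `F`, whose bi-order traversal starts at position `base`,
has a node with subtree `t` whose first occurrence is at position `p`. -/
inductive OccF {α : Type} : Forest α → ℕ → ℕ → Tree' α → Prop
  | head (a : α) (cs ts : Forest α) (base : ℕ) :
      OccF (Tree'.node a cs :: ts) base base (Tree'.node a cs)
  | inChildren {cs : Forest α} {p : ℕ} {t : Tree' α} (a : α) (ts : Forest α) (base : ℕ) :
      OccF cs (base + 1) p t → OccF (Tree'.node a cs :: ts) base p t
  | inRest {ts : Forest α} {p : ℕ} {t : Tree' α} (t0 : Tree' α) (base : ℕ) :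
      OccF ts (base + 2 * Tree'.size t0) p t → OccF (t0 :: ts) base p t

/-- The label of the root of a tree. -/
def Tree'.label {α : Type} : Tree' α → α
  | .node a _ => a

/-- A node occurrence `(p, t)` (first occurrence at position `p`, subtree `t`) is a strict
ancestor of the occurrence `(q, s)`. -/
def Anc {α : Type} (u v : ℕ × Tree' α) : Prop :=
  u.1 < v.1 ∧ v.1 + 2 * Tree'.size v.2 ≤ u.1 + 2 * Tree'.size u.2

/-- The node occurrence `u` precedes the node occurrence `v`: `r(u) ≤ l(v)`. -/
def Prec {α : Type} (u v : ℕ × Tree' α) : Prop :=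
  u.1 + 2 * Tree'.size u.2 ≤ v.1

/-! In an optimal pair of edit scripts for a tree `u(cs)` and a forest `S`, either the root `u`
is deleted, and what remains is a pair of scripts for `cs` and `S` plus one deletion, or `u`
survives (possibly relabeled) as the root of a single tree. In the latter case that tree is the
image of some node `v` of `S`, everything of `S` outside the subtree of `v` is deleted, and the
cost splits as `ed(cs, children v) + δ(u, v) + (|S| - |subtree v|)`; conversely each of these
patterns is realised by a script. In terms of similarity this is the recurrence for
`S = T2[i, j)`, whose nodes are the nodes of `T2` with traversal interval inside `[i, j)`, and
where cutting strictly inside the interval of `v` leaves exactly the children of `v`. -/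

section

variable {α : Type}

@[elab_as_elim]
theorem Forest.induction {motive : Forest α → Prop} (nil : motive [])
    (node : ∀ a cs ts, motive cs → motive ts → motive (Tree'.node a cs :: ts)) :
    ∀ F, motive F
  | [] => nil
  | Tree'.node a cs :: ts =>
    node a cs ts (Forest.induction nil node cs) (Forest.induction nil node ts)

def Tree'.children : Tree' α → Forest α
  | .node _ cs => cs

@[simp]
theorem Tree'.size_node (a : α) (cs : Forest α) :
    Tree'.size (Tree'.node a cs) = 1 + Forest.size cs := rfl

@[simp]
theorem Forest.size_nil : Forest.size ([] : Forest α) = 0 := rfl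

@[simp]
theorem Forest.size_cons (t : Tree' α) (ts : Forest α) :
    Forest.size (t :: ts) = Tree'.size t + Forest.size ts := rfl

@[simp]
theorem Forest.size_append (F G : Forest α) :
    Forest.size (F ++ G) = Forest.size F + Forest.size G := by
  induction F with
  | nil => simp
  | cons t ts ih => simp [ih, Nat.add_assoc]

theorem Tree'.one_le_size (t : Tree' α) : 1 ≤ Tree'.size t := by
  cases t; simp

theorem EditStep.size_bounds {F G : Forest α} (h : EditStep F G) :
    Forest.size G ≤ Forest.size F ∧ Forest.size F ≤ Forest.size G + 1 := by
  induction h <;> simp <;> omega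

theorem EditStep.append_append {F G : Forest α} (pre post : Forest α) (h : EditStep F G) :
    EditStep (pre ++ F ++ post) (pre ++ G ++ post) := by
  induction h with
  | delete pre' a cs post' =>
    simpa using EditStep.delete (pre ++ pre') a cs (post' ++ post)
  | relabel pre' a b cs post' =>
    simpa using EditStep.relabel (pre ++ pre') a b cs (post' ++ post)
  | inside pre' a post' h _ =>
    simpa using EditStep.inside (pre ++ pre') a (post' ++ post) h

theorem EditStep.delete_root (a : α) (cs : Forest α) : EditStep [Tree'.node a cs] cs := by
  simpa using EditStep.delete [] a cs []

theorem EditStep.relabel_root (a b : α) (cs : Forest α) :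
    EditStep [Tree'.node a cs] [Tree'.node b cs] := by
  simpa using EditStep.relabel [] a b cs []

theorem EditStep.inside_root (a : α) {cs cs' : Forest α} (h : EditStep cs cs') :
    EditStep [Tree'.node a cs] [Tree'.node a cs'] := by
  simpa using EditStep.inside [] a [] h

theorem EditStep.eq_of_singleton {a : α} {cs H : Forest α}
    (h : EditStep [Tree'.node a cs] H) :
    H = cs ∨ (∃ b, H = [Tree'.node b cs]) ∨ ∃ cs', EditStep cs cs' ∧ H = [Tree'.node a cs'] := by
  generalize hF : [Tree'.node a cs] = F at h
  cases h with
  | delete pre b ds post =>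
    obtain ⟨rfl, ⟨⟩, rfl⟩ : pre = [] ∧ Tree'.node b ds = Tree'.node a cs ∧ post = [] := by
      simpa using List.append_eq_singleton_iff.1 hF.symm
    exact Or.inl (by simp)
  | relabel pre b c ds post =>
    obtain ⟨rfl, ⟨⟩, rfl⟩ : pre = [] ∧ Tree'.node b ds = Tree'.node a cs ∧ post = [] := by
      simpa using List.append_eq_singleton_iff.1 hF.symm
    exact Or.inr (Or.inl ⟨c, by simp⟩)
  | @inside pre b ds ds' post h =>
    obtain ⟨rfl, ⟨⟩, rfl⟩ : pre = [] ∧ Tree'.node b ds = Tree'.node a cs ∧ post = [] := by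
      simpa using List.append_eq_singleton_iff.1 hF.symm
    exact Or.inr (Or.inr ⟨ds', h, by simp⟩)

namespace EditSteps

theorem single {F G : Forest α} (h : EditStep F G) : EditSteps 1 F G :=
  tail (refl F) h

theorem trans {m n : ℕ} {F G H : Forest α} (h₁ : EditSteps m F G) (h₂ : EditSteps n G H) :
    EditSteps (m + n) F H := by
  induction h₂ with
  | refl => exact h₁
  | tail _ s ih => exact tail (ih h₁) s

theorem append_append {n : ℕ} {F G : Forest α} (pre post : Forest α) (h : EditSteps n F G) :
    EditSteps n (pre ++ F ++ post) (pre ++ G ++ post) := by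
  induction h with
  | refl => exact refl _
  | tail _ s ih => exact tail ih (s.append_append pre post)

theorem inside_root {n : ℕ} (a : α) {cs cs' : Forest α} (h : EditSteps n cs cs') :
    EditSteps n [Tree'.node a cs] [Tree'.node a cs'] := by
  induction h with
  | refl => exact refl _
  | tail _ s ih => exact tail ih (s.inside_root a)

theorem delete_all (F : Forest α) : EditSteps (Forest.size F) F [] := by
  induction F using Forest.induction with
  | nil => exact refl _
  | node a cs ts ihcs ihts =>
    have hroot : EditSteps 1 (Tree'.node a cs :: ts) (cs ++ ts) :=
      single (by simpa using EditStep.delete [] a cs ts)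
    have hcs : EditSteps (Forest.size cs) (cs ++ ts) ts := by
      simpa using ihcs.append_append [] ts
    simpa [Nat.add_assoc] using (hroot.trans hcs).trans ihts

end EditSteps

inductive IsSubtree : Tree' α → Forest α → Prop
  | head (t : Tree' α) (ts : Forest α) : IsSubtree t (t :: ts)
  | inChildren {t : Tree' α} {cs : Forest α} (a : α) (ts : Forest α) :
      IsSubtree t cs → IsSubtree t (Tree'.node a cs :: ts)
  | tail {t : Tree' α} {ts : Forest α} (t₀ : Tree' α) : IsSubtree t ts → IsSubtree t (t₀ :: ts)

namespace IsSubtree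

theorem size_le {t : Tree' α} {F : Forest α} (h : IsSubtree t F) :
    Tree'.size t ≤ Forest.size F := by
  induction h with
  | head => simp
  | inChildren => simp; omega
  | tail => simp; omega

theorem append_right {t : Tree' α} {F : Forest α} (h : IsSubtree t F) (G : Forest α) :
    IsSubtree t (F ++ G) := by
  induction h with
  | head => exact head _ _
  | inChildren a _ h _ => exact inChildren a _ h
  | tail t₀ _ ih => exact tail t₀ ih

theorem append_left {t : Tree' α} {G : Forest α} (F : Forest α) (h : IsSubtree t G) :
    IsSubtree t (F ++ G) := by
  induction F with
  | nil => exact h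
  | cons t₀ _ ih => exact tail t₀ ih

theorem of_append {t : Tree' α} {F G : Forest α} (h : IsSubtree t (F ++ G)) :
    IsSubtree t F ∨ IsSubtree t G := by
  induction F with
  | nil => exact Or.inr h
  | cons t₀ ts ih =>
    cases h with
    | head => exact Or.inl (head _ _)
    | inChildren a _ h => exact Or.inl (inChildren a _ h)
    | tail _ h => exact (ih h).imp_left (tail t₀)

theorem editSteps_singleton {t : Tree' α} {F : Forest α} (h : IsSubtree t F) :
    EditSteps (Forest.size F - Tree'.size t) F [t] := by
  induction h with
  | head ts =>
    simpa using (EditSteps.delete_all ts).append_append [t] []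
  | @inChildren cs a ts h ih =>
    have hts : EditSteps (Forest.size ts) (Tree'.node a cs :: ts) [Tree'.node a cs] := by
      simpa using (EditSteps.delete_all ts).append_append [Tree'.node a cs] []
    have := (hts.trans (EditSteps.single (EditStep.delete_root a cs))).trans ih
    convert this using 1
    have := h.size_le
    simp; omega
  | @tail ts t₀ h ih =>
    have ht₀ : EditSteps (Tree'.size t₀) (t₀ :: ts) ts := by
      simpa using (EditSteps.delete_all [t₀]).append_append [] ts
    convert ht₀.trans ih using 1
    have := h.size_le
    simp; omega

end IsSubtree

/-- Pulling a subtree of the result of an edit step back to the source: it was untouched,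
edited strictly inside, or relabeled at its root. -/
theorem EditStep.exists_isSubtree_of_isSubtree {G H : Forest α} (h : EditStep G H)
    {b : α} {ds : Forest α} (hsub : IsSubtree (Tree'.node b ds) H) :
    IsSubtree (Tree'.node b ds) G ∨
    (∃ ds', IsSubtree (Tree'.node b ds') G ∧ EditStep ds' ds ∧
      Forest.size G + Forest.size ds = Forest.size H + Forest.size ds') ∨
    (∃ b', IsSubtree (Tree'.node b' ds) G ∧ Forest.size G = Forest.size H) := by
  induction h generalizing b ds with
  | delete pre a cs post =>
    rcases hsub.of_append with hs | hs
    · rcases hs.of_append with hs | hs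
      · exact Or.inl (hs.append_right _)
      · exact Or.inl ((hs.inChildren a post).append_left pre)
    · exact Or.inl ((hs.tail _).append_left pre)
  | relabel pre a c cs post =>
    rcases hsub.of_append with hs | hs
    · exact Or.inl (hs.append_right _)
    · cases hs with
      | head => exact Or.inr (Or.inr ⟨a, (IsSubtree.head _ _).append_left pre, by simp⟩)
      | inChildren _ _ hs => exact Or.inl ((hs.inChildren a post).append_left pre)
      | tail _ hs => exact Or.inl ((hs.tail _).append_left pre)
  | @inside pre a cs cs' post hstep ih =>
    rcases hsub.of_append with hs | hs
    · exact Or.inl (hs.append_right _)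
    · cases hs with
      | head =>
        exact Or.inr (Or.inl ⟨cs, (IsSubtree.head _ _).append_left pre, hstep, by simp; omega⟩)
      | inChildren _ _ hs =>
        rcases ih hs with h₁ | ⟨ds', h₁, hds, hsz⟩ | ⟨b', h₁, hsz⟩
        · exact Or.inl ((h₁.inChildren a post).append_left pre)
        · exact Or.inr (Or.inl ⟨ds', (h₁.inChildren a post).append_left pre, hds,
            by simp; omega⟩)
        · exact Or.inr (Or.inr ⟨b', (h₁.inChildren a post).append_left pre, by simp; omega⟩)
      | tail _ hs => exact Or.inl ((hs.tail _).append_left pre)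

theorem ed_le_of_editSteps {F₁ F₂ G : Forest α} {k₁ k₂ : ℕ} (h₁ : EditSteps k₁ F₁ G)
    (h₂ : EditSteps k₂ F₂ G) : ed F₁ F₂ ≤ k₁ + k₂ :=
  Nat.sInf_le ⟨k₁, k₂, G, rfl, h₁, h₂⟩

theorem exists_editSteps_of_ed (F₁ F₂ : Forest α) :
    ∃ k₁ k₂ G, ed F₁ F₂ = k₁ + k₂ ∧ EditSteps k₁ F₁ G ∧ EditSteps k₂ F₂ G :=
  Nat.sInf_mem (s := {k | ∃ k₁ k₂ G, k = k₁ + k₂ ∧ EditSteps k₁ F₁ G ∧ EditSteps k₂ F₂ G})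
    ⟨_, _, _, [], rfl, EditSteps.delete_all F₁, EditSteps.delete_all F₂⟩

theorem ed_node_le_ed_children (a : α) (cs S : Forest α) :
    ed [Tree'.node a cs] S ≤ ed cs S + 1 := by
  obtain ⟨k₁, k₂, G, hed, h₁, h₂⟩ := exists_editSteps_of_ed cs S
  have := ed_le_of_editSteps ((EditSteps.single (EditStep.delete_root a cs)).trans h₁) h₂
  omega

section Relabel

variable [DecidableEq α]

/-- The cost `δ(a, b)` of turning label `a` into label `b`. -/
def relabelCost (a b : α) : ℕ := if a = b then 0 else 1

@[simp]
theorem relabelCost_self (a : α) : relabelCost a a = 0 := if_pos rfl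

theorem relabelCost_le_one (a b : α) : relabelCost a b ≤ 1 := by
  unfold relabelCost; split_ifs <;> simp

theorem relabelCost_le_add (a b c : α) :
    relabelCost a c ≤ relabelCost a b + relabelCost c b := by
  unfold relabelCost; split_ifs <;> simp_all

/-- Every node of the target of an edit script comes from a node of the source; the bound
charges the script for the nodes outside the two subtrees and for relabeling the root. -/
theorem EditSteps.exists_isSubtree_of_isSubtree {m : ℕ} {S G : Forest α}
    (h : EditSteps m S G) {b : α} {ds : Forest α} (hsub : IsSubtree (Tree'.node b ds) G) :
    ∃ c cs n, IsSubtree (Tree'.node c cs) S ∧ EditSteps n cs ds ∧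
      n + Forest.size S + Forest.size ds + relabelCost c b ≤ m + Forest.size G + Forest.size cs := by
  induction h generalizing b ds with
  | refl => exact ⟨b, ds, 0, hsub, refl _, by simp⟩
  | tail _ s ih =>
    have hsz := s.size_bounds
    rcases s.exists_isSubtree_of_isSubtree hsub with h₁ | ⟨ds', h₁, hds, hsz'⟩ | ⟨b', h₁, hsz'⟩
    · obtain ⟨c, cs, n, hc, hn, hbound⟩ := ih h₁
      exact ⟨c, cs, n, hc, hn, by omega⟩
    · obtain ⟨c, cs, n, hc, hn, hbound⟩ := ih h₁
      exact ⟨c, cs, n + 1, hc, hn.tail hds, by omega⟩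
    · obtain ⟨c, cs, n, hc, hn, hbound⟩ := ih h₁
      have := relabelCost_le_one c b
      exact ⟨c, cs, n, hc, hn, by omega⟩

theorem EditSteps.of_singleton {n : ℕ} {a : α} {cs H : Forest α}
    (h : EditSteps n [Tree'.node a cs] H) :
    (∃ n' < n, EditSteps n' cs H) ∨
    ∃ a' cs' n', H = [Tree'.node a' cs'] ∧ EditSteps n' cs cs' ∧ n' + relabelCost a a' ≤ n := by
  generalize hF : [Tree'.node a cs] = F at h
  induction h with
  | refl => exact Or.inr ⟨a, cs, 0, hF.symm, refl _, by simp⟩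
  | tail _ s ih =>
    rcases ih hF with ⟨n', hn', hsteps⟩ | ⟨a', cs', n', rfl, hsteps, hbound⟩
    · exact Or.inl ⟨n' + 1, by omega, hsteps.tail s⟩
    · rcases s.eq_of_singleton with rfl | ⟨b, rfl⟩ | ⟨cs'', hstep, rfl⟩
      · exact Or.inl ⟨n', by omega, hsteps⟩
      · have := relabelCost_le_one a b
        exact Or.inr ⟨b, cs', n', rfl, hsteps, by omega⟩
      · exact Or.inr ⟨a', cs'', n' + 1, rfl, hsteps.tail hstep, by omega⟩

theorem editSteps_relabel_root (a b : α) {cs cs' : Forest α} {n : ℕ} (h : EditSteps n cs cs') :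
    EditSteps (n + relabelCost a b) [Tree'.node a cs] [Tree'.node b cs'] := by
  unfold relabelCost
  split_ifs with hab
  · exact hab ▸ h.inside_root a
  · exact (h.inside_root a).tail (EditStep.relabel_root a b cs')

/-- Map the root onto the root of a subtree `Tree'.node b csv` of `S` and delete the rest
of `S`. -/
theorem ed_node_le_of_isSubtree (a b : α) (cs csv : Forest α) {S : Forest α}
    (hsub : IsSubtree (Tree'.node b csv) S) :
    ed [Tree'.node a cs] S + Forest.size csv + 1 ≤
      ed cs csv + relabelCost a b + Forest.size S := by
  obtain ⟨k₁, k₂, G, hed, h₁, h₂⟩ := exists_editSteps_of_ed cs csv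
  have := ed_le_of_editSteps (editSteps_relabel_root a b h₁)
    (hsub.editSteps_singleton.trans (h₂.inside_root b))
  have := hsub.size_le
  simp only [Tree'.size_node] at *
  omega

theorem le_ed_node (a : α) (cs S : Forest α) :
    ed cs S + 1 ≤ ed [Tree'.node a cs] S ∨
    ∃ b csv, IsSubtree (Tree'.node b csv) S ∧
      ed cs csv + relabelCost a b + Forest.size S ≤
        ed [Tree'.node a cs] S + Forest.size csv + 1 := by
  obtain ⟨k₁, k₂, G, hed, h₁, h₂⟩ := exists_editSteps_of_ed [Tree'.node a cs] S
  rcases h₁.of_singleton with ⟨n, hn, hcs⟩ | ⟨a', cs', n, rfl, hcs, hn⟩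
  · left
    have := ed_le_of_editSteps hcs h₂
    omega
  · right
    obtain ⟨b, csv, m, hsub, hcsv, hm⟩ := h₂.exists_isSubtree_of_isSubtree (IsSubtree.head _ [])
    refine ⟨b, csv, hsub, ?_⟩
    have := ed_le_of_editSteps hcs hcsv
    have := relabelCost_le_add a a' b
    simp only [Forest.size_cons, Tree'.size_node, Forest.size_nil] at hm
    omega

theorem sim_node_isGreatest (a : α) (cs S : Forest α) :
    IsGreatest {x : ℤ | x = sim cs S ∨
        ∃ v, IsSubtree v S ∧ x = sim cs v.children + (if a = v.label then (2 : ℤ) else 1)}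
      (sim [Tree'.node a cs] S) := by
  have hη (b : α) : (if a = b then (2 : ℤ) else 1) = 2 - relabelCost a b := by
    unfold relabelCost; split_ifs <;> rfl
  have hchildren := ed_node_le_ed_children a cs S
  refine ⟨?_, ?_⟩
  · rcases le_ed_node a cs S with h | ⟨b, csv, hsub, h⟩
    · left
      simp only [sim, Forest.size_cons, Tree'.size_node, Forest.size_nil]
      omega
    · right
      refine ⟨_, hsub, ?_⟩
      have := ed_node_le_of_isSubtree a b cs csv hsub
      rw [hη]
      simp only [sim, Forest.size_cons, Tree'.size_node, Forest.size_nil, Tree'.children,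
        Tree'.label]
      omega
  · rintro x (rfl | ⟨⟨b, csv⟩, hsub, rfl⟩)
    · simp only [sim, Forest.size_cons, Tree'.size_node, Forest.size_nil]
      omega
    · have := ed_node_le_of_isSubtree a b cs csv hsub
      rw [hη]
      simp only [sim, Forest.size_cons, Tree'.size_node, Forest.size_nil, Tree'.children,
        Tree'.label]
      omega

end Relabel

theorem cutF_eq_nil_of_le {l r p : ℕ} (F : Forest α) (h : r ≤ p) : cutF l r p F = [] := by
  induction F using Forest.induction generalizing p with
  | nil => rfl
  | node a cs ts ihcs ihts =>
    rw [cutF, cutT, if_neg (by simp; omega), ihcs (by omega), ihts (by simp; omega)]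
    rfl

theorem cutF_eq_nil_of_add_le {l r p : ℕ} (F : Forest α) (h : p + 2 * Forest.size F ≤ l) :
    cutF l r p F = [] := by
  induction F using Forest.induction generalizing p with
  | nil => rfl
  | node a cs ts ihcs ihts =>
    simp only [Forest.size_cons, Tree'.size_node] at h
    rw [cutF, cutT, if_neg (by simp; omega), ihcs (by omega), ihts (by simp; omega)]
    rfl

theorem cutF_eq_self {l r p : ℕ} (F : Forest α) (hl : l ≤ p) (hr : p + 2 * Forest.size F ≤ r) :
    cutF l r p F = F := by
  induction F using Forest.induction generalizing p with
  | nil => rfl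
  | node a cs ts _ ihts =>
    simp only [Forest.size_cons, Tree'.size_node] at hr
    rw [cutF, cutT, if_pos (by simp; omega), ihts (by simp; omega) (by simp; omega)]
    rfl

namespace OccF

theorem bounds {F : Forest α} {base p : ℕ} {t : Tree' α} (h : OccF F base p t) :
    base ≤ p ∧ p + 2 * Tree'.size t ≤ base + 2 * Forest.size F := by
  induction h <;> simp <;> omega

theorem isSubtree {F : Forest α} {base p : ℕ} {t : Tree' α} (h : OccF F base p t) :
    IsSubtree t F := by
  induction h with
  | head => exact IsSubtree.head _ _
  | inChildren a _ _ _ ih => exact IsSubtree.inChildren a _ ih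
  | inRest t₀ _ _ ih => exact IsSubtree.tail t₀ ih

theorem append_right {F : Forest α} {base p : ℕ} {t : Tree' α} (h : OccF F base p t)
    (G : Forest α) : OccF (F ++ G) base p t := by
  induction h with
  | head a cs _ base => exact head a cs _ base
  | inChildren a _ base h _ => exact inChildren a _ base h
  | inRest t₀ base _ ih => exact inRest t₀ base ih

theorem isSubtree_cutF {F : Forest α} {base p : ℕ} {t : Tree' α} (h : OccF F base p t)
    {l r : ℕ} (hl : l ≤ p) (hr : p + 2 * Tree'.size t ≤ r) :
    IsSubtree t (cutF l r base F) := by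
  induction h with
  | head a cs ts base =>
    rw [cutF, cutT, if_pos ⟨hl, hr⟩]
    exact IsSubtree.head _ _
  | @inChildren cs p t a ts base h ih =>
    rw [cutF, cutT]
    split_ifs
    · exact (IsSubtree.inChildren a [] h.isSubtree).append_right _
    · exact (ih hl hr).append_right _
  | inRest t₀ base _ ih =>
    rw [cutF]
    exact (ih hl hr).append_left _

theorem cutF_eq_children {F : Forest α} {base p : ℕ} {t : Tree' α} (h : OccF F base p t) :
    cutF (p + 1) (p + 2 * Tree'.size t - 1) base F = t.children := by
  induction h with
  | head a cs ts base =>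
    rw [cutF, cutT, if_neg (by omega), cutF_eq_self cs (by omega) (by simp; omega),
      cutF_eq_nil_of_le ts (by simp)]
    simp [Tree'.children]
  | @inChildren cs p t a ts base h ih =>
    have := h.bounds
    have := t.one_le_size
    rw [cutF, cutT, if_neg (by omega), ih, cutF_eq_nil_of_le ts (by simp; omega)]
    simp
  | @inRest ts p t t₀ base h ih =>
    have := h.bounds
    have := t.one_le_size
    obtain ⟨a₀, cs₀⟩ := t₀
    simp only [Tree'.size_node] at this ⊢
    rw [cutF, ih, cutT, if_neg (by simp; omega), cutF_eq_nil_of_add_le cs₀ (by omega)]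
    rfl

end OccF

theorem IsSubtree.exists_occF {t : Tree' α} {F : Forest α} (h : IsSubtree t F) (base : ℕ) :
    ∃ p, OccF F base p t ∧ base ≤ p ∧ p + 2 * Tree'.size t ≤ base + 2 * Forest.size F := by
  induction h generalizing base with
  | head ts =>
    obtain ⟨a, cs⟩ := t
    exact ⟨base, OccF.head a cs ts base, le_rfl, by simp⟩
  | @inChildren cs a ts _ ih =>
    obtain ⟨p, hp, h₁, h₂⟩ := ih (base + 1)
    exact ⟨p, OccF.inChildren a ts base hp, by omega, by simp; omega⟩
  | @tail ts t₀ _ ih =>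
    obtain ⟨p, hp, h₁, h₂⟩ := ih (base + 2 * Tree'.size t₀)
    exact ⟨p, OccF.inRest t₀ base hp, by omega, by simp; omega⟩

theorem isSubtree_cutF_iff {l r base : ℕ} {t : Tree' α} (F : Forest α) :
    IsSubtree t (cutF l r base F) ↔ ∃ p, OccF F base p t ∧ l ≤ p ∧ p + 2 * Tree'.size t ≤ r := by
  refine ⟨fun h => ?_, fun ⟨p, hp, hl, hr⟩ => hp.isSubtree_cutF hl hr⟩
  induction F using Forest.induction generalizing base with
  | nil => cases h
  | node a cs ts ihcs ihts =>
    rw [cutF] at h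
    rcases h.of_append with h | h
    · rw [cutT] at h
      split_ifs at h with hc
      · obtain ⟨p, hp, h₁, h₂⟩ := h.exists_occF base
        exact ⟨p, by simpa using hp.append_right ts, by omega, by simp at h₂ hc; omega⟩
      · obtain ⟨p, hp, h₁, h₂⟩ := ihcs h
        exact ⟨p, OccF.inChildren a ts base hp, h₁, h₂⟩
    · obtain ⟨p, hp, h₁, h₂⟩ := ihts h
      exact ⟨p, OccF.inRest _ base hp, h₁, h₂⟩

end

/-- For a single tree `F` with root labeled `a` and children forest `cs`:
`sim(F, T2[i,j))` is the maximum of `sim(F - u, T2[i,j))` and, over all nodes `v ∈ T2[i,j)`,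
`sim(F - u, T2[l(v)+1, r(v)-1)) + η(u, v)` where `η(u,v) = 2 - δ(u,v)`. -/
theorem sim_root_recurrence {α : Type} [DecidableEq α] (T2 : Forest α) (a : α)
    (cs : Forest α) (i j : ℕ) (hi : 1 ≤ i) (hij : i ≤ j)
    (hj : j ≤ 2 * Forest.size T2 + 1) :
    IsGreatest {x : ℤ |
        x = sim cs (subforest T2 i j) ∨
        ∃ (p : ℕ) (v : Tree' α), OccF T2 1 p v ∧ i ≤ p ∧ p + 2 * Tree'.size v ≤ j ∧
          x = sim cs (subforest T2 (p + 1) (p + 2 * Tree'.size v - 1)) +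
              (if a = Tree'.label v then (2 : ℤ) else 1)}
      (sim [Tree'.node a cs] (subforest T2 i j)) := by
  convert sim_node_isGreatest a cs (subforest T2 i j) using 3 with x
  refine or_congr_right ⟨?_, ?_⟩
  · rintro ⟨p, v, hocc, hip, hpj, rfl⟩
    exact ⟨v, hocc.isSubtree_cutF hip hpj, by rw [subforest, hocc.cutF_eq_children]⟩
  · rintro ⟨v, hsub, rfl⟩
    obtain ⟨p, hocc, hip, hpj⟩ := (isSubtree_cutF_iff T2).1 hsub
    exact ⟨p, v, hocc, hip, hpj, by rw [subforest, hocc.cutF_eq_children]⟩
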